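/- arXiv:2003.09409 — 7 statements merged into one kernel-verified Lean document; each statement's English description precedes it below -/
import Mathlib

section
/- The achromatic number of the Kneser graph K(5,2) (the Petersen graph) equals 5. -/
open Finset

/-- The Kneser graph `K(n,k)`: vertices are the `k`-subsets of `{1,…,n}`,
adjacent iff disjoint. -/
def kneser (n k : ℕ) : SimpleGraph {s : Finset (Fin n) // s.card = k} where
  Adj x y := x ≠ y ∧ Disjoint x.1 y.1
  symm := ⟨fun _ _ h => ⟨h.1.symm, h.2.symm⟩⟩
  loopless := ⟨fun _ h => h.1 rfl⟩

/-- A proper coloring with colors in `Fin l`. -/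
def IsProperColoring {V : Type*} (G : SimpleGraph V) {l : ℕ} (c : V → Fin l) : Prop :=
  ∀ u v, G.Adj u v → c u ≠ c v

/-- A complete `l`-coloring: surjective, and every pair of distinct colors
appears on the endpoints of some edge. -/
def IsCompleteColoring {V : Type*} (G : SimpleGraph V) {l : ℕ} (c : V → Fin l) : Prop :=
  Function.Surjective c ∧
    ∀ i j : Fin l, i ≠ j → ∃ u v, G.Adj u v ∧ c u = i ∧ c v = j

/-- Numbers `l` admitting a proper complete `l`-coloring; the achromatic number
is the greatest element of this set. -/
def achromaticSet {V : Type*} (G : SimpleGraph V) : Set ℕ :=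
  {l | ∃ c : V → Fin l, IsProperColoring G c ∧ IsCompleteColoring G c}

/-- Numbers `l` admitting a (not necessarily proper) complete `l`-coloring; the
pseudoachromatic number is the greatest element of this set. -/
def pseudoachromaticSet {V : Type*} (G : SimpleGraph V) : Set ℕ :=
  {l | ∃ c : V → Fin l, IsCompleteColoring G c}

/-!
In a complete colouring a colour used on a single vertex `v` must meet every other colour in the
neighbourhood of `v`, so with more than `Δ + 1` colours every colour class has at least two
vertices and there are at most `|V| / 2` colours. For the Petersen graph `Δ = 3` and `|V| = 10`,
which bounds the number of colours by `5`. Conversely, colouring each pair by its tail in the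
rotational tournament on `ℤ/5` is complete, and proper because each colour lies in the pairs it
colours.
-/

instance (n k : ℕ) : DecidableRel (kneser n k).Adj :=
  fun x y => inferInstanceAs (Decidable (x ≠ y ∧ Disjoint x.1 y.1))

section CompleteColoring

variable {V : Type*} [Fintype V] {G : SimpleGraph V} [DecidableRel G.Adj] {l : ℕ}
  {c : V → Fin l}

theorem IsCompleteColoring.le_degree_add_one (hc : IsCompleteColoring G c) {v : V}
    (hv : ∀ w, c w = c v → w = v) : l ≤ G.degree v + 1 := by
  have hsub : univ.erase (c v) ⊆ (G.neighborFinset v).image c := by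
    intro j hj
    obtain ⟨u, w, huw, hu, rfl⟩ := hc.2 (c v) j (ne_of_mem_erase hj).symm
    obtain rfl := hv u hu
    exact mem_image_of_mem c ((G.mem_neighborFinset u w).2 huw)
  have := (card_le_card hsub).trans card_image_le
  rw [card_erase_of_mem (mem_univ _), card_univ, Fintype.card_fin,
    SimpleGraph.card_neighborFinset_eq_degree] at this
  have := (c v).pos
  omega

theorem IsCompleteColoring.two_mul_le_card (hc : IsCompleteColoring G c)
    (hdeg : ∀ v, G.degree v + 1 < l) : 2 * l ≤ Fintype.card V := by
  have hfiber : ∀ i, 2 ≤ #{v | c v = i} := by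
    intro i
    obtain ⟨v, rfl⟩ := hc.1 i
    by_contra! hsmall
    have hv : ∀ w, c w = c v → w = v := fun w hw =>
      card_le_one.1 (Nat.le_of_lt_succ hsmall) w (mem_filter.2 ⟨mem_univ _, hw⟩) v
        (mem_filter.2 ⟨mem_univ _, rfl⟩)
    exact (hdeg v).not_ge (hc.le_degree_add_one hv)
  calc 2 * l = ∑ _i : Fin l, 2 := by simp [mul_comm]
    _ ≤ ∑ i, #{v | c v = i} := sum_le_sum fun i _ => hfiber i
    _ = Fintype.card V := (card_eq_sum_card_fiberwise fun v _ => mem_univ (c v)).symm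

theorem IsCompleteColoring.le_maxDegree_add_one_or_two_mul_le_card
    (hc : IsCompleteColoring G c) : l ≤ G.maxDegree + 1 ∨ 2 * l ≤ Fintype.card V := by
  by_contra! h
  exact h.2.not_ge (hc.two_mul_le_card fun v => by have := G.degree_le_maxDegree v; omega)

end CompleteColoring

theorem kneser_isProperColoring_of_mem {n k : ℕ}
    (c : {s : Finset (Fin n) // s.card = k} → Fin n) (hc : ∀ v, c v ∈ v.1) :
    IsProperColoring (kneser n k) c :=
  fun u v huv hcuv => disjoint_left.1 huv.2 (hc u) (hcuv ▸ hc v)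

lemma kneser_five_two_card : Fintype.card {s : Finset (Fin 5) // s.card = 2} = 10 := by decide

lemma kneser_five_two_maxDegree : (kneser 5 2).maxDegree ≤ 3 :=
  SimpleGraph.maxDegree_le_of_forall_degree_le _ _ (by decide)

/-- The tail of `{a, b}` with `a < b` is `a` iff `b - a ≤ 2`; otherwise `a ∈ {b + 1, b + 2}`
in `ℤ/5`. -/
def petersenColoring (v : {s : Finset (Fin 5) // s.card = 2}) : Fin 5 :=
  have hv : v.1.Nonempty := card_pos.1 (by rw [v.2]; norm_num)
  if v.1.max' hv - v.1.min' hv ≤ 2 then v.1.min' hv else v.1.max' hv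

lemma petersenColoring_mem (v : {s : Finset (Fin 5) // s.card = 2}) :
    petersenColoring v ∈ v.1 := by
  dsimp only [petersenColoring]
  split_ifs
  exacts [min'_mem _ _, max'_mem _ _]

lemma isCompleteColoring_petersenColoring : IsCompleteColoring (kneser 5 2) petersenColoring := by
  unfold IsCompleteColoring; decide

/-- The achromatic number of the Kneser graph K(5,2) (the Petersen graph) equals 5. -/
theorem achromatic_kneser_5_2 : IsGreatest (achromaticSet (kneser 5 2)) 5 := by
  refine ⟨⟨petersenColoring, kneser_isProperColoring_of_mem _ petersenColoring_mem,
    isCompleteColoring_petersenColoring⟩, ?_⟩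
  rintro l ⟨c, -, hc⟩
  have hbound := hc.le_maxDegree_add_one_or_two_mul_le_card
  rw [kneser_five_two_card] at hbound
  have hdeg := kneser_five_two_maxDegree
  omega
end

section
/- For n ≥ 7, the pseudoachromatic number of the Kneser graph K(n,2) is at most ⌊(binomial(n,2) + ⌊n/2⌋)/2⌋. -/
open Finset

/-!
In a complete coloring, two colors that are each used on a single vertex must meet on an edge,
so the vertices forming singleton color classes are pairwise adjacent. In `K(n,2)` such a clique
consists of pairwise disjoint pairs, so there are at most `⌊n/2⌋` singleton classes; every other
class has at least two vertices. Counting the `C(n,2)` vertices class by class gives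
`2 l ≤ C(n,2) + ⌊n/2⌋`.
-/

theorem Function.Surjective.two_mul_card_le_card_add_card_singleton_fibers
    {α β : Type*} [Fintype α] [Fintype β] [DecidableEq β] {f : α → β}
    (hf : Function.Surjective f) :
    2 * Fintype.card β ≤ Fintype.card α + #{b | #{a | f a = b} = 1} := by
  calc 2 * Fintype.card β = ∑ _b : β, 2 := by
        rw [sum_const, smul_eq_mul, card_univ, Nat.mul_comm]
    _ ≤ ∑ b, (#{a | f a = b} + if #{a | f a = b} = 1 then 1 else 0) := by
        refine sum_le_sum fun b _ => ?_
        obtain ⟨a, rfl⟩ := hf b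
        have : 0 < #{a' | f a' = f a} := card_pos.2 ⟨a, by simp⟩
        split_ifs <;> omega
    _ = Fintype.card α + #{b | #{a | f a = b} = 1} := by
        rw [sum_add_distrib, sum_boole, Nat.cast_id, ← card_univ,
          ← card_eq_sum_card_fiberwise fun a _ => mem_coe.2 (mem_univ (f a))]

namespace IsCompleteColoring

variable {V : Type*} [Fintype V] {G : SimpleGraph V} {l : ℕ} {c : V → Fin l}

theorem eq_of_card_class_eq_one {v w : V} (hv : #{u | c u = c v} = 1) (hw : c w = c v) :
    w = v :=
  card_le_one.1 hv.le w (by simp [hw]) v (by simp)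

theorem isClique_singleton_classes (hc : IsCompleteColoring G c) :
    G.IsClique (({v | #{u | c u = c v} = 1} : Finset V) : Set V) := by
  intro u hu v hv huv
  simp only [coe_filter, mem_univ, true_and, Set.mem_ofPred_eq] at hu hv
  have hcuv : c u ≠ c v := fun h => huv (eq_of_card_class_eq_one hv h)
  obtain ⟨x, y, hxy, hx, hy⟩ := hc.2 _ _ hcuv
  rwa [eq_of_card_class_eq_one hu hx, eq_of_card_class_eq_one hv hy] at hxy

theorem card_singleton_colors_le (hc : IsCompleteColoring G c) :
    #{i | #{u | c u = i} = 1} ≤ #{v | #{u | c u = c v} = 1} := by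
  refine (card_le_card fun i hi => ?_).trans (card_image_le (f := c))
  obtain ⟨v, rfl⟩ := hc.1 i
  exact mem_image.2 ⟨v, by simpa using hi, rfl⟩

theorem exists_isClique_two_mul_le (hc : IsCompleteColoring G c) :
    ∃ T : Finset V, G.IsClique (T : Set V) ∧ 2 * l ≤ Fintype.card V + #T :=
  ⟨_, hc.isClique_singleton_classes, by
    simpa using hc.1.two_mul_card_le_card_add_card_singleton_fibers.trans
      (Nat.add_le_add_left hc.card_singleton_colors_le _)⟩

end IsCompleteColoring

theorem kneser_mul_card_le_of_isClique {n k : ℕ} {T : Finset {s : Finset (Fin n) // s.card = k}}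
    (hT : (kneser n k).IsClique (T : Set _)) : k * #T ≤ n := by
  have hdisj : (T : Set _).PairwiseDisjoint Subtype.val := fun _ hx _ hy hxy => (hT hx hy hxy).2
  calc k * #T = ∑ x ∈ T, #x.1 := by
        rw [sum_congr rfl fun x _ => x.2, sum_const, smul_eq_mul, mul_comm]
    _ = #(T.biUnion Subtype.val) := (card_biUnion hdisj).symm
    _ ≤ n := card_le_univ _ |>.trans_eq (Fintype.card_fin n)

theorem pseudoachromatic_kneser_upper_general (n : ℕ)
    (l : ℕ) (hl : l ∈ pseudoachromaticSet (kneser n 2)) :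
    l ≤ (n.choose 2 + n / 2) / 2 := by
  obtain ⟨c, hc⟩ := hl
  obtain ⟨T, hT, hcount⟩ := hc.exists_isClique_two_mul_le
  have hclique := kneser_mul_card_le_of_isClique hT
  rw [Fintype.card_finset_len, Fintype.card_fin] at hcount
  omega

/-- For n ≥ 7, the pseudoachromatic number of K(n,2) is at most
⌊(C(n,2) + ⌊n/2⌋)/2⌋. -/
theorem pseudoachromatic_kneser_upper (n : ℕ) (hn : 7 ≤ n)
    (l : ℕ) (hl : l ∈ pseudoachromaticSet (kneser n 2)) :
    l ≤ (n.choose 2 + n / 2) / 2 :=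
  pseudoachromatic_kneser_upper_general n l hl
end

section
/- For n ≥ 7, the pseudoachromatic number of the Kneser graph K(n,2) is at least ⌊binomial(n,2)/2⌋. -/
open Finset

/-! A pair system on a set of points is a family of pairs `{u i, v i}` (below `pair i false` and
`pair i true`) of disjoint 2-subsets, all `2 l` of them distinct, whose 4-element unions are
distinct as well. Colouring `u i` and `v i` with `i` (and everything else arbitrarily) is a
complete colouring of `K(n,2)`: if every member of pair `i` met both members of pair `j`, the union
of pair `i` would lie in the union of pair `j`.

So it suffices to find on `n` points a pair system using all but at most one 2-subset. For
`n = 7, 8` one is given explicitly. A system on `ZMod m` extends to the points `ZMod m ⊕ {A, B}`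
by the `m` pairs `{A, x}, {B, x + k}`, and, if a 2-subset `{c, d}` was left over, by the pair
`{c, d}, {A, B}`; the shift `k` only has to avoid `0`, the elements of order two and `±(d - c)`,
which is possible as soon as `m ≥ 5`. -/

namespace Finset

variable {α β : Type*}

theorem disjSum_union_disjSum [DecidableEq α] [DecidableEq β] (s₁ s₂ : Finset α)
    (t₁ t₂ : Finset β) : s₁.disjSum t₁ ∪ s₂.disjSum t₂ = (s₁ ∪ s₂).disjSum (t₁ ∪ t₂) := by
  ext (x | y) <;> simp

theorem disjoint_disjSum_disjSum {s₁ s₂ : Finset α} {t₁ t₂ : Finset β} :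
    Disjoint (s₁.disjSum t₁) (s₂.disjSum t₂) ↔ Disjoint s₁ s₂ ∧ Disjoint t₁ t₂ := by
  simp only [disjoint_left, Sum.forall, inl_mem_disjSum, inr_mem_disjSum]

theorem subset_union_of_not_disjoint [DecidableEq α] {s p q : Finset α} (hs : #s ≤ 2)
    (hpq : Disjoint p q) (hp : ¬Disjoint s p) (hq : ¬Disjoint s q) : s ⊆ p ∪ q := by
  rw [not_disjoint_iff_nonempty_inter, ← card_pos] at hp hq
  have hcard : #s ≤ #(s ∩ (p ∪ q)) := by
    rw [inter_union_distrib_left,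
      card_union_of_disjoint (hpq.mono inter_subset_right inter_subset_right)]
    omega
  exact inter_eq_left.1 (eq_of_subset_of_card_le inter_subset_left hcard)

end Finset

open Function

structure PairSystem (α ι : Type*) [DecidableEq α] where
  pair : ι → Bool → Finset α
  card_pair : ∀ i b, #(pair i b) = 2
  disjoint_pair : ∀ i, Disjoint (pair i false) (pair i true)
  injective_pair : Injective (uncurry pair)
  injective_support : Injective fun i => pair i false ∪ pair i true

namespace PairSystem

variable {α β ι κ : Type*} [DecidableEq α] [DecidableEq β]

theorem card_support (S : PairSystem α ι) (i : ι) : #(S.pair i false ∪ S.pair i true) = 4 := by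
  rw [card_union_of_disjoint (S.disjoint_pair i), S.card_pair, S.card_pair]

theorem exists_disjoint_pair (S : PairSystem α ι) {i j : ι} (hij : i ≠ j) :
    ∃ a b, Disjoint (S.pair i a) (S.pair j b) := by
  by_contra! h
  have hsub (a : Bool) : S.pair i a ⊆ S.pair j false ∪ S.pair j true :=
    subset_union_of_not_disjoint (S.card_pair i a).le (S.disjoint_pair j) (h a false) (h a true)
  refine hij (S.injective_support (eq_of_subset_of_card_le (union_subset (hsub _) (hsub _)) ?_))
  rw [S.card_support, S.card_support]

theorem exists_card_eq_two_forall_ne [Fintype α] [Fintype ι] (S : PairSystem α ι)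
    (h : 2 * Fintype.card ι < (Fintype.card α).choose 2) :
    ∃ e : Finset α, #e = 2 ∧ ∀ i a, S.pair i a ≠ e := by
  have hlt : #(univ.image (uncurry S.pair)) < #(univ.powersetCard 2) :=
    calc #(univ.image (uncurry S.pair)) ≤ Fintype.card (ι × Bool) := card_image_le
      _ = 2 * Fintype.card ι := by simp [mul_comm]
      _ < #(univ.powersetCard 2) := by simpa using h
  obtain ⟨e, he, heS⟩ := exists_mem_notMem_of_card_lt_card hlt
  exact ⟨e, (mem_powersetCard.1 he).2, fun i a hia => heS (mem_image.2 ⟨(i, a), mem_univ _, hia⟩)⟩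

def map (S : PairSystem α ι) (f : α ↪ β) : PairSystem β ι where
  pair i b := (S.pair i b).map f
  card_pair i b := by rw [card_map, S.card_pair]
  disjoint_pair i := (disjoint_map f).2 (S.disjoint_pair i)
  injective_pair := (map_injective f).comp S.injective_pair
  injective_support i j h :=
    S.injective_support (map_injective f (by simpa only [map_union] using h))

def inl (S : PairSystem α ι) : PairSystem (α ⊕ β) ι where
  pair i b := (S.pair i b).disjSum ∅
  card_pair i b := by rw [card_disjSum, S.card_pair, card_empty]
  disjoint_pair i := disjoint_disjSum_disjSum.2 ⟨S.disjoint_pair i, disjoint_empty_left _⟩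
  injective_pair _ _ h := S.injective_pair (disjSum_inj.1 h).1
  injective_support i j h := S.injective_support <| by
    simpa only [disjSum_union_disjSum, disjSum_inj, and_true] using h

def single (s t : Finset α) (hs : #s = 2) (ht : #t = 2) (hst : Disjoint s t) :
    PairSystem α Unit where
  pair _ b := bif b then t else s
  card_pair _ b := by cases b <;> assumption
  disjoint_pair _ := hst
  injective_pair := by
    have hne : s ≠ t := by
      rintro rfl
      rw [disjoint_self_iff_empty] at hst
      simp [hst] at hs
    rintro ⟨⟨⟩, a⟩ ⟨⟨⟩, b⟩ h
    cases a <;> cases b <;> simp_all [eq_comm]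
  injective_support _ _ _ := rfl

def sum (S : PairSystem α ι) (T : PairSystem α κ) (hpair : ∀ i j a b, S.pair i a ≠ T.pair j b)
    (hsupport : ∀ i j, S.pair i false ∪ S.pair i true ≠ T.pair j false ∪ T.pair j true) :
    PairSystem α (ι ⊕ κ) where
  pair := Sum.elim S.pair T.pair
  card_pair := by rintro (i | j) b; exacts [S.card_pair i b, T.card_pair j b]
  disjoint_pair := by rintro (i | j); exacts [S.disjoint_pair i, T.disjoint_pair j]
  injective_pair := by
    rintro ⟨i | i, a⟩ ⟨j | j, b⟩ h
    · simpa using S.injective_pair (a₁ := (i, a)) (a₂ := (j, b)) h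
    · exact absurd h (hpair i j a b)
    · exact absurd h.symm (hpair j i b a)
    · simpa using T.injective_pair (a₁ := (i, a)) (a₂ := (j, b)) h
  injective_support := by
    rintro (i | i) (j | j) h
    · exact congrArg Sum.inl (S.injective_support h)
    · exact absurd h (hsupport i j)
    · exact absurd h.symm (hsupport j i)
    · exact congrArg Sum.inr (T.injective_support h)

def rotation (σ : Equiv.Perm α) (hfix : ∀ x, σ x ≠ x) (hfix₂ : ∀ x, σ (σ x) ≠ x) :
    PairSystem (α ⊕ Bool) α where
  -- the pairs `{x, A}` and `{σ x, B}`, where `A = inr false` and `B = inr true`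
  pair x b := ({bif b then σ x else x} : Finset α).disjSum {b}
  card_pair x b := by simp [card_disjSum]
  disjoint_pair x := by simp [disjoint_disjSum_disjSum, (hfix x).symm]
  injective_pair := by
    rintro ⟨x, a⟩ ⟨y, b⟩ h
    simp only [uncurry_apply_pair, disjSum_inj, singleton_inj] at h
    obtain ⟨h, rfl⟩ := h
    cases a
    · simpa using h
    · simpa using σ.injective h
  injective_support x y h := by
    simp only [cond_false, cond_true, disjSum_union_disjSum, disjSum_inj, ← insert_eq] at h
    by_contra hxy
    have hx : x = σ y := by simpa [hxy] using h.1.subset (mem_insert_self x _)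
    have hy : y = σ x := by simpa [Ne.symm hxy] using h.1.symm.subset (mem_insert_self y _)
    exact hfix₂ x (by rw [← hy, hx])

def extendByRotation (S : PairSystem α ι) (σ : Equiv.Perm α) (hfix : ∀ x, σ x ≠ x)
    (hfix₂ : ∀ x, σ (σ x) ≠ x) : PairSystem (α ⊕ Bool) (ι ⊕ α) :=
  S.inl.sum (rotation σ hfix hfix₂)
    (fun _ _ _ b h => singleton_ne_empty b (disjSum_inj.1 h).2.symm)
    (fun _ _ h => by
      simp only [inl, rotation, disjSum_union_disjSum, disjSum_inj] at h
      simp [Finset.ext_iff] at h)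

def extendByRotationAndPair (S : PairSystem α ι) (σ : Equiv.Perm α) (hfix : ∀ x, σ x ≠ x)
    (hfix₂ : ∀ x, σ (σ x) ≠ x) (e : Finset α) (he : #e = 2) (hSe : ∀ i a, S.pair i a ≠ e)
    (hσe : ∀ x, {x, σ x} ≠ e) : PairSystem (α ⊕ Bool) ((ι ⊕ α) ⊕ Unit) :=
  (S.extendByRotation σ hfix hfix₂).sum
    (single (e.disjSum ∅) ((∅ : Finset α).disjSum univ) (by simp [he]) (by simp) (by simp))
    (by
      rintro (i | x) ⟨⟩ a (_ | _) h <;>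
        simp only [extendByRotation, sum, inl, rotation, single, Sum.elim_inl, Sum.elim_inr,
          cond_false, cond_true, disjSum_inj] at h
      · exact hSe i a h.1
      all_goals simp [Finset.ext_iff] at h)
    (by
      rintro (i | x) ⟨⟩ h <;>
        simp only [extendByRotation, sum, inl, rotation, single, Sum.elim_inl, Sum.elim_inr,
          cond_false, cond_true, disjSum_union_disjSum, disjSum_inj, ← insert_eq,
          union_empty] at h
      · simp [Finset.ext_iff] at h
      · exact hσe x h.1)

end PairSystem

theorem card_mem_pseudoachromaticSet_of_classes {V ι : Type*} [Fintype ι] [Nonempty ι]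
    (G : SimpleGraph V) (cls : ι → Set V) (hne : ∀ i, (cls i).Nonempty)
    (hdisj : Pairwise (Disjoint on cls))
    (hadj : Pairwise fun i j => ∃ x ∈ cls i, ∃ y ∈ cls j, G.Adj x y) :
    Fintype.card ι ∈ pseudoachromaticSet G := by
  classical
  let c : V → ι := fun v => if h : ∃ i, v ∈ cls i then h.choose else Classical.arbitrary ι
  have hc (i : ι) (v : V) (hv : v ∈ cls i) : c v = i := by
    have h : ∃ i, v ∈ cls i := ⟨i, hv⟩
    simp only [c, dif_pos h]
    by_contra hi
    exact Set.disjoint_left.1 (hdisj hi) h.choose_spec hv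
  let e := Fintype.equivFin ι
  refine ⟨e ∘ c, fun k => ?_, fun k l hkl => ?_⟩
  · obtain ⟨v, hv⟩ := hne (e.symm k)
    exact ⟨v, by simp [hc _ v hv]⟩
  · obtain ⟨x, hx, y, hy, hxy⟩ := hadj (e.symm.injective.ne hkl)
    exact ⟨x, y, hxy, by simp [hc _ x hx], by simp [hc _ y hy]⟩

theorem PairSystem.card_mem_pseudoachromaticSet_kneser {n : ℕ} {ι : Type*} [Fintype ι]
    [Nonempty ι] (S : PairSystem (Fin n) ι) :
    Fintype.card ι ∈ pseudoachromaticSet (kneser n 2) := by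
  refine card_mem_pseudoachromaticSet_of_classes _
    (fun i => Set.range fun b => ⟨S.pair i b, S.card_pair i b⟩)
    (fun i => Set.range_nonempty _) (fun i j hij => ?_) (fun i j hij => ?_)
  · rw [Function.onFun, Set.disjoint_range_iff]
    intro a b h
    exact hij (congrArg Prod.fst
      (S.injective_pair (a₁ := (i, a)) (a₂ := (j, b)) (congrArg Subtype.val h)))
  · obtain ⟨a, b, hab⟩ := S.exists_disjoint_pair hij
    refine ⟨_, ⟨a, rfl⟩, _, ⟨b, rfl⟩, fun h => ?_, hab⟩
    have hne : (S.pair i a).Nonempty := card_pos.1 (by rw [S.card_pair]; norm_num)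
    exact hab.ne hne.ne_empty (congrArg Subtype.val h)

def HasNearPerfectPairSystem (α : Type) [DecidableEq α] [Fintype α] : Prop :=
  ∃ (ι : Type) (_ : Fintype ι),
    Fintype.card ι = (Fintype.card α).choose 2 / 2 ∧ Nonempty (PairSystem α ι)

theorem HasNearPerfectPairSystem.of_equiv {α β : Type} [DecidableEq α] [Fintype α]
    [DecidableEq β] [Fintype β] (e : α ≃ β) (h : HasNearPerfectPairSystem α) :
    HasNearPerfectPairSystem β := by
  obtain ⟨ι, _, hcard, ⟨S⟩⟩ := h
  exact ⟨ι, _, by rw [hcard, Fintype.card_congr e], ⟨S.map e.toEmbedding⟩⟩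

theorem ZMod.natCast_ne_zero_of_pos_of_lt {m a : ℕ} (h0 : 0 < a) (ha : a < m) :
    (a : ZMod m) ≠ 0 :=
  (ZMod.natCast_eq_zero_iff a m).not.2 fun hdvd => h0.ne' (Nat.eq_zero_of_dvd_of_lt hdvd ha)

theorem ZMod.exists_shift_avoiding {m : ℕ} (hm : 5 ≤ m) (c d : ZMod m) :
    ∃ k : ZMod m, k ≠ 0 ∧ k + k ≠ 0 ∧ c + k ≠ d ∧ d + k ≠ c := by
  have h1 : (1 : ZMod m) ≠ 0 := by exact_mod_cast natCast_ne_zero_of_pos_of_lt one_pos (by omega)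
  have h2 : (2 : ZMod m) ≠ 0 := by exact_mod_cast natCast_ne_zero_of_pos_of_lt two_pos (by omega)
  have h3 : (3 : ZMod m) ≠ 0 := by
    exact_mod_cast natCast_ne_zero_of_pos_of_lt three_pos (by omega)
  have h4 : (4 : ZMod m) ≠ 0 := by
    exact_mod_cast natCast_ne_zero_of_pos_of_lt four_pos (by omega)
  by_cases hcd : c + 1 = d ∨ d + 1 = c
  · refine ⟨2, h2, by grind, ?_, ?_⟩ <;> grind
  · exact ⟨1, h1, by rwa [one_add_one_eq_two], by grind, by grind⟩

theorem HasNearPerfectPairSystem.zmod_sum_bool {m : ℕ} [NeZero m] (hm : 5 ≤ m)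
    (h : HasNearPerfectPairSystem (ZMod m)) : HasNearPerfectPairSystem (ZMod m ⊕ Bool) := by
  obtain ⟨ι, _, hcard, ⟨S⟩⟩ := h
  have hchoose : (Fintype.card (ZMod m ⊕ Bool)).choose 2 = m.choose 2 + 2 * m + 1 := by
    simp [Nat.choose_succ_succ, Nat.choose_one_right]
    omega
  rw [ZMod.card] at hcard
  rcases Nat.even_or_odd (m.choose 2) with ⟨r, hr⟩ | ⟨r, hr⟩
  · obtain ⟨k, hk, hk₂, -⟩ := ZMod.exists_shift_avoiding hm 0 0
    refine ⟨ι ⊕ ZMod m, inferInstance, ?_, ⟨S.extendByRotation (Equiv.addRight k)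
      (by simpa using hk) (by simpa [add_assoc] using hk₂)⟩⟩
    rw [Fintype.card_sum, hcard, ZMod.card, hchoose]
    omega
  · obtain ⟨e, he, hSe⟩ := S.exists_card_eq_two_forall_ne (by rw [hcard, ZMod.card]; omega)
    obtain ⟨c, d, -, rfl⟩ := card_eq_two.1 he
    obtain ⟨k, hk, hk₂, hck, hdk⟩ := ZMod.exists_shift_avoiding hm c d
    refine ⟨(ι ⊕ ZMod m) ⊕ Unit, inferInstance, ?_,
      ⟨S.extendByRotationAndPair (Equiv.addRight k) (by simpa using hk)
        (by simpa [add_assoc] using hk₂) _ he hSe fun x hx => ?_⟩⟩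
    · rw [Fintype.card_sum, Fintype.card_sum, hcard, ZMod.card, Fintype.card_unit, hchoose]
      omega
    · have hx : ({x, x + k} : Set (ZMod m)) = {c, d} := by
        simpa using congrArg ((↑) : Finset (ZMod m) → Set (ZMod m)) hx
      rcases Set.pair_eq_pair_iff.1 hx with ⟨rfl, rfl⟩ | ⟨rfl, rfl⟩
      exacts [hck rfl, hdk rfl]

theorem hasNearPerfectPairSystem_fin_seven : HasNearPerfectPairSystem (Fin 7) := by
  let t : Fin 10 → Finset (Fin 7) × Finset (Fin 7) :=
    ![({1, 5}, {3, 4}), ({3, 6}, {4, 5}), ({2, 4}, {5, 6}), ({0, 6}, {1, 3}), ({0, 3}, {1, 2}),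
      ({2, 3}, {1, 6}), ({4, 6}, {0, 2}), ({2, 5}, {0, 4}), ({1, 4}, {0, 5}), ({2, 6}, {0, 1})]
  exact ⟨Fin 10, _, rfl, ⟨⟨fun i b => bif b then (t i).2 else (t i).1, by decide, by decide,
    by decide, by decide⟩⟩⟩

theorem hasNearPerfectPairSystem_fin_eight : HasNearPerfectPairSystem (Fin 8) := by
  let t : Fin 14 → Finset (Fin 8) × Finset (Fin 8) :=
    ![({3, 5}, {0, 2}), ({0, 5}, {3, 4}), ({1, 7}, {0, 6}), ({5, 6}, {2, 7}), ({2, 4}, {5, 7}),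
      ({4, 7}, {3, 6}), ({1, 4}, {2, 5}), ({0, 1}, {4, 6}), ({2, 6}, {1, 3}), ({0, 3}, {1, 6}),
      ({6, 7}, {4, 5}), ({0, 4}, {2, 3}), ({3, 7}, {1, 2}), ({1, 5}, {0, 7})]
  exact ⟨Fin 14, _, rfl, ⟨⟨fun i b => bif b then (t i).2 else (t i).1, by decide, by decide,
    by decide, by decide⟩⟩⟩

theorem hasNearPerfectPairSystem_fin (n : ℕ) (hn : 7 ≤ n) :
    HasNearPerfectPairSystem (Fin n) := by
  induction n using Nat.strong_induction_on with
  | _ n ih =>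
    obtain rfl | rfl | hn₉ : n = 7 ∨ n = 8 ∨ 9 ≤ n := by omega
    · exact hasNearPerfectPairSystem_fin_seven
    · exact hasNearPerfectPairSystem_fin_eight
    · obtain ⟨m, rfl⟩ := Nat.exists_eq_add_of_le' hn₉
      have hzmod : HasNearPerfectPairSystem (ZMod (m + 7)) :=
        (ih (m + 7) (by omega) (by omega)).of_equiv (Fintype.equivOfCardEq (by simp))
      exact (hzmod.zmod_sum_bool (by omega)).of_equiv (Fintype.equivOfCardEq (by simp))

/-- For n ≥ 7, the pseudoachromatic number of K(n,2) is at least ⌊C(n,2)/2⌋: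
there is a complete coloring with that many colors. -/
theorem pseudoachromatic_kneser_lower (n : ℕ) (hn : 7 ≤ n) :
    n.choose 2 / 2 ∈ pseudoachromaticSet (kneser n 2) := by
  obtain ⟨ι, _, hcard, ⟨S⟩⟩ := hasNearPerfectPairSystem_fin n hn
  rw [Fintype.card_fin] at hcard
  have : Nonempty ι := by
    have h21 := Nat.choose_le_choose 2 hn
    rw [← Fintype.card_pos_iff, hcard]
    norm_num [Nat.choose] at h21 ⊢
    omega
  simpa [hcard] using S.card_mem_pseudoachromaticSet_kneser
end

section
/- The pseudoachromatic number of the Kneser graph K(n,2) equals its achromatic number for 2 ≤ n ≤ 6; in particular ψ(K(4,2)) = 3, ψ(K(5,2)) = 5, and ψ(K(6,2)) = 7. -/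
open Finset

section Coloring

variable {V : Type*} [Fintype V] (G : SimpleGraph V) [DecidableRel G.Adj] {l : ℕ}

instance (c : V → Fin l) : Decidable (IsProperColoring G c) := by
  unfold IsProperColoring; infer_instance

instance [DecidableEq V] (c : V → Fin l) : Decidable (IsCompleteColoring G c) := by
  unfold IsCompleteColoring Function.Surjective; infer_instance

omit [Fintype V] [DecidableRel G.Adj] in
theorem achromaticSet_subset_pseudoachromaticSet : achromaticSet G ⊆ pseudoachromaticSet G :=
  fun _ ⟨c, _, hc⟩ => ⟨c, hc⟩

variable {G}

theorem le_add_one_of_mem_pseudoachromaticSet {d : ℕ} (hdeg : ∀ v, G.degree v ≤ d)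
    (hV : Fintype.card V < 2 * l) (hl : l ∈ pseudoachromaticSet G) : l ≤ d + 1 := by
  obtain ⟨c, hsurj, hpair⟩ := hl
  obtain ⟨i, hi⟩ := Fintype.exists_card_fiber_lt_of_card_lt_mul c (by simpa [mul_comm] using hV)
  obtain ⟨v, rfl⟩ := hsurj i
  have hsingleton : ∀ u, c u = c v → u = v := fun u hu =>
    card_le_one.1 (Nat.le_of_lt_succ hi) u (by simp [hu]) v (by simp)
  have hcolors : univ.erase (c v) ⊆ (G.neighborFinset v).image c := by
    intro j hj
    obtain ⟨u, w, hadj, hu, hw⟩ := hpair (c v) j (ne_of_mem_erase hj).symm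
    obtain rfl := hsingleton u hu
    exact mem_image.2 ⟨w, (G.mem_neighborFinset u w).2 hadj, hw⟩
  calc l = #(univ.erase (c v)) + 1 := by simp [Nat.sub_add_cancel (c v).pos]
    _ ≤ #((G.neighborFinset v).image c) + 1 := by gcongr
    _ ≤ G.degree v + 1 := by grw [card_image_le, G.card_neighborFinset_eq_degree]
    _ ≤ d + 1 := by grw [hdeg v]

variable (G) in
theorem isGreatest_of_isCompleteColoring {m d : ℕ} (c : V → Fin m)
    (hproper : IsProperColoring G c) (hcomplete : IsCompleteColoring G c)
    (hdeg : ∀ v, G.degree v ≤ d) (hd : d + 1 ≤ m) (hV : Fintype.card V < 2 * (m + 1)) :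
    IsGreatest (achromaticSet G) m ∧ IsGreatest (pseudoachromaticSet G) m := by
  have hle : ∀ l ∈ pseudoachromaticSet G, l ≤ m := fun l hl => by
    by_contra! hlm
    have := le_add_one_of_mem_pseudoachromaticSet hdeg (by omega) hl
    omega
  exact ⟨⟨⟨c, hproper, hcomplete⟩, fun l hl =>
    hle l (achromaticSet_subset_pseudoachromaticSet G hl)⟩, ⟨⟨c, hcomplete⟩, hle⟩⟩

end Coloring

def kneserFourColoring (v : {s : Finset (Fin 4) // s.card = 2}) : Fin 3 :=
  if v.1 = {0, 1} ∨ v.1 = {1, 2} then 0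
  else if v.1 = {0, 2} ∨ v.1 = {2, 3} then 1
  else 2

def kneserFiveColoring (v : {s : Finset (Fin 5) // s.card = 2}) : Fin 5 :=
  if v.1 = {0, 1} ∨ v.1 = {1, 3} then 0
  else if v.1 = {1, 4} ∨ v.1 = {2, 4} then 1
  else if v.1 = {2, 3} ∨ v.1 = {3, 4} then 2
  else if v.1 = {0, 2} ∨ v.1 = {1, 2} then 3
  else 4

def kneserSixColoring (v : {s : Finset (Fin 6) // s.card = 2}) : Fin 7 :=
  if v.1 = {0, 2} ∨ v.1 = {0, 5} then 0
  else if v.1 = {1, 2} ∨ v.1 = {2, 5} then 1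
  else if v.1 = {3, 5} ∨ v.1 = {4, 5} then 2
  else if v.1 = {2, 3} ∨ v.1 = {3, 4} then 3
  else if v.1 = {1, 4} ∨ v.1 = {1, 5} then 4
  else if v.1 = {0, 4} ∨ v.1 = {2, 4} then 6
  else 5

/-- The pseudoachromatic number of K(n,2) equals its achromatic number for
2 ≤ n ≤ 6; in particular ψ(K(4,2)) = 3, ψ(K(5,2)) = 5 and ψ(K(6,2)) = 7. -/
theorem pseudoachromatic_eq_achromatic_small :
    (∀ n, 2 ≤ n → n ≤ 6 → ∀ a p : ℕ,
      IsGreatest (achromaticSet (kneser n 2)) a →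
      IsGreatest (pseudoachromaticSet (kneser n 2)) p → p = a) ∧
    IsGreatest (pseudoachromaticSet (kneser 4 2)) 3 ∧
    IsGreatest (pseudoachromaticSet (kneser 5 2)) 5 ∧
    IsGreatest (pseudoachromaticSet (kneser 6 2)) 7 := by
  have g2 := isGreatest_of_isCompleteColoring (kneser 2 2) (fun _ => (0 : Fin 1))
    (by decide) (by decide) (d := 0) (by decide) (by norm_num) (by decide)
  have g3 := isGreatest_of_isCompleteColoring (kneser 3 2) (fun _ => (0 : Fin 1))
    (by decide) (by decide) (d := 0) (by decide) (by norm_num) (by decide)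
  have g4 := isGreatest_of_isCompleteColoring (kneser 4 2) kneserFourColoring
    (by decide) (by decide) (d := 1) (by decide) (by norm_num) (by decide)
  have g5 := isGreatest_of_isCompleteColoring (kneser 5 2) kneserFiveColoring
    (by decide) (by decide) (d := 3) (by decide) (by norm_num) (by decide)
  have g6 := isGreatest_of_isCompleteColoring (kneser 6 2) kneserSixColoring
    (by decide) (by decide) (d := 6) (by decide) (by norm_num) (by decide)
  refine ⟨fun n h2 h6 a p ha hp => ?_, g4.2, g5.2, g6.2⟩
  interval_cases n
  · exact (hp.unique g2.2).trans (ha.unique g2.1).symm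
  · exact (hp.unique g3.2).trans (ha.unique g3.1).symm
  · exact (hp.unique g4.2).trans (ha.unique g4.1).symm
  · exact (hp.unique g5.2).trans (ha.unique g5.1).symm
  · exact (hp.unique g6.2).trans (ha.unique g6.1).symm
end

section
/- Let ς be a complete l-coloring of K(n,k) and let x be the size of a smallest color class. If n − kx ≥ k, then l ≤ 1 + x·binomial(n−k,k) − (x−1)·binomial(n−kx,k). -/
/-!
Let `X` be the class of colour `i`, of size `x`. Every other colour occurs on a neighbour of `X`,
so `l - 1` is at most the size of the neighbourhood `N(X)`. Counting the edges leaving `X`, each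
vertex of `N(X)` absorbs at least one of the at most `x·C(n-k,k)` edges, and each common neighbour
of `X` absorbs `x` of them; hence `|N(X)| + (x-1)·|T| ≤ x·C(n-k,k)` for the common neighbourhood
`T`. Finally `T` contains every `k`-set avoiding the at most `k·x` points covered by `X`, so
`|T| ≥ C(n-kx,k)`.
-/

open Finset

namespace SimpleGraph

variable {V : Type*} [Fintype V] (G : SimpleGraph V) [DecidableRel G.Adj]

def neighborhood (X : Finset V) : Finset V := {v | ∃ u ∈ X, G.Adj u v}

def commonNeighborhood (X : Finset V) : Finset V := {v | ∀ u ∈ X, G.Adj u v}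

variable {G}

theorem commonNeighborhood_subset_neighborhood {X : Finset V} (hX : X.Nonempty) :
    G.commonNeighborhood X ⊆ G.neighborhood X := by
  obtain ⟨u, hu⟩ := hX
  intro v hv
  simp only [commonNeighborhood, neighborhood, mem_filter, mem_univ, true_and] at hv ⊢
  exact ⟨u, hu, hv u hu⟩

theorem card_neighborhood_add_le [DecidableEq V] {X : Finset V} (hX : X.Nonempty) {d : ℕ}
    (hd : ∀ u ∈ X, G.degree u ≤ d) :
    #(G.neighborhood X) + (#X - 1) * #(G.commonNeighborhood X) ≤ #X * d := by
  set N := G.neighborhood X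
  set T := G.commonNeighborhood X
  let f : V → ℕ := fun v => #(X.bipartiteBelow G.Adj v)
  have hTN : T ⊆ N := commonNeighborhood_subset_neighborhood hX
  have hf_pos : ∀ v ∈ N \ T, 1 ≤ f v := by
    intro v hv
    obtain ⟨u, hu, huv⟩ : ∃ u ∈ X, G.Adj u v := by simpa [N, neighborhood] using (mem_sdiff.1 hv).1
    exact card_pos.2 ⟨u, (mem_bipartiteBelow G.Adj).2 ⟨hu, huv⟩⟩
  have hf_T : ∀ v ∈ T, f v = #X := by
    intro v hv
    refine congrArg card (filter_true_of_mem fun u hu => ?_)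
    simp only [T, commonNeighborhood, mem_filter, mem_univ, true_and] at hv
    exact hv u hu
  have hcount : ∑ v, f v = ∑ u ∈ X, G.degree u := by
    rw [← sum_card_bipartiteAbove_eq_sum_card_bipartiteBelow]
    refine sum_congr rfl fun u _ => ?_
    rw [← card_neighborFinset_eq_degree, neighborFinset_eq_filter]
    rfl
  calc #N + (#X - 1) * #T = #(N \ T) + #X * #T := by
        rw [← card_sdiff_add_card_eq_card hTN, Nat.sub_one_mul]
        have : #T ≤ #X * #T := Nat.le_mul_of_pos_left _ hX.card_pos
        omega
    _ ≤ ∑ v ∈ N \ T, f v + ∑ v ∈ T, f v := by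
        rw [sum_congr rfl hf_T, sum_const, smul_eq_mul, mul_comm]
        exact Nat.add_le_add_right (by simpa using card_nsmul_le_sum _ f 1 hf_pos) _
    _ = ∑ v ∈ N, f v := sum_sdiff hTN
    _ ≤ ∑ v, f v := sum_le_sum_of_subset (subset_univ N)
    _ ≤ #X * d := by
        rw [hcount]
        exact (sum_le_sum hd).trans (by rw [sum_const, smul_eq_mul])

end SimpleGraph

theorem IsCompleteColoring.le_one_add_card_neighborhood {V : Type*} [Fintype V]
    {G : SimpleGraph V} [DecidableRel G.Adj] {l : ℕ} {c : V → Fin l}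
    (hc : IsCompleteColoring G c) (i : Fin l) :
    l ≤ 1 + #(G.neighborhood {v | c v = i}) := by
  have hsub : univ.erase i ⊆ (G.neighborhood {v | c v = i}).image c := by
    intro j hj
    obtain ⟨u, v, huv, hu, hv⟩ := hc.2 i j (ne_of_mem_erase hj).symm
    exact mem_image.2 ⟨v, by simpa [SimpleGraph.neighborhood] using ⟨u, hu, huv⟩, hv⟩
  have := (card_le_card hsub).trans card_image_le
  rw [card_erase_of_mem (mem_univ i), card_univ, Fintype.card_fin] at this
  omega

instance inst_s11 (n k : ℕ) : DecidableRel (kneser n k).Adj :=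
  fun u v => inferInstanceAs (Decidable (u ≠ v ∧ Disjoint u.1 v.1))

section Kneser

variable {n k : ℕ}

theorem kneser_zero_not_adj (u v : {s : Finset (Fin n) // s.card = 0}) : ¬ (kneser n 0).Adj u v :=
  fun h => h.1 (Subtype.ext (by rw [card_eq_zero.1 u.2, card_eq_zero.1 v.2]))

theorem kneser_adj_iff (hk : 0 < k) {u v : {s : Finset (Fin n) // s.card = k}} :
    (kneser n k).Adj u v ↔ Disjoint u.1 v.1 := by
  refine ⟨And.right, fun h => ⟨fun huv => ?_, h⟩⟩
  rw [huv, disjoint_self_iff_empty] at h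
  exact hk.ne (by simpa [h] using v.2)

theorem kneser_degree_le (u : {s : Finset (Fin n) // s.card = k}) :
    (kneser n k).degree u ≤ (n - k).choose k :=
  calc (kneser n k).degree u ≤ #(u.1ᶜ.powersetCard k) := by
        rw [← SimpleGraph.card_neighborFinset_eq_degree, SimpleGraph.neighborFinset_eq_filter]
        refine card_le_card_of_injOn Subtype.val (fun v hv => ?_) Subtype.val_injective.injOn
        simp only [mem_coe, mem_filter, mem_univ, true_and, mem_powersetCard,
          subset_compl_iff_disjoint_right] at hv ⊢
        exact ⟨hv.2.symm, v.2⟩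
    _ = (n - k).choose k := by rw [card_powersetCard, card_compl, Fintype.card_fin, u.2]

theorem choose_le_card_commonNeighborhood_kneser (hk : 0 < k)
    (X : Finset {s : Finset (Fin n) // s.card = k}) :
    (n - k * #X).choose k ≤ #((kneser n k).commonNeighborhood X) := by
  set U := X.biUnion Subtype.val
  have hU : #U ≤ k * #X := by
    rw [mul_comm]
    exact card_biUnion_le_card_mul _ _ _ fun u _ => u.2.le
  calc (n - k * #X).choose k ≤ (#Uᶜ).choose k := by
        apply Nat.choose_le_choose
        rw [card_compl, Fintype.card_fin]
        omega
    _ = #(Uᶜ.powersetCard k) := (card_powersetCard _ _).symm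
    _ ≤ _ := by
        refine card_le_card_of_surjOn Subtype.val fun s hs => ?_
        simp only [mem_coe, mem_powersetCard, subset_compl_iff_disjoint_right] at hs
        refine ⟨⟨s, hs.2⟩, ?_, rfl⟩
        simp only [SimpleGraph.commonNeighborhood, mem_coe, mem_filter, mem_univ, true_and,
          kneser_adj_iff hk]
        exact fun u hu => hs.1.symm.mono_left (subset_biUnion_of_mem Subtype.val hu)

end Kneser

theorem pseudoachromatic_kneser_refined_upper_general (n k l x : ℕ)
    (c : {s : Finset (Fin n) // s.card = k} → Fin l)
    (hc : IsCompleteColoring (kneser n k) c)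
    (hx : ∃ i : Fin l, (Finset.univ.filter (fun v => c v = i)).card = x) :
    (l : ℤ) ≤ 1 + x * ((n - k).choose k) - (x - 1 : ℤ) * ((n - k * x).choose k) := by
  obtain ⟨i, rfl⟩ := hx
  set X : Finset {s : Finset (Fin n) // s.card = k} := {v | c v = i}
  have hl := hc.le_one_add_card_neighborhood i
  rcases Nat.eq_zero_or_pos k with rfl | hk
  · have hN : (kneser n 0).neighborhood X = ∅ := by
      simp [SimpleGraph.neighborhood, kneser_zero_not_adj]
    rw [hN, card_empty] at hl
    simp only [Nat.sub_zero, Nat.choose_zero_right, Nat.cast_one]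
    omega
  have hX : X.Nonempty := let ⟨v, hv⟩ := hc.1 i; ⟨v, by simp [X, hv]⟩
  have hN := (kneser n k).card_neighborhood_add_le hX fun u _ => kneser_degree_le u
  have hT := choose_le_card_commonNeighborhood_kneser hk X
  zify [hX.card_pos] at hl hN hT
  have hX1 : (0 : ℤ) ≤ #X - 1 := by linarith [hX.card_pos]
  linarith [mul_le_mul_of_nonneg_left hT hX1]

/-- If ς is a complete l-coloring of K(n,k) and x is the size of a smallest
color class, with n − kx ≥ k, then
l ≤ 1 + x·C(n−k,k) − (x−1)·C(n−kx,k). -/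
theorem pseudoachromatic_kneser_refined_upper (n k l x : ℕ)
    (c : {s : Finset (Fin n) // s.card = k} → Fin l)
    (hc : IsCompleteColoring (kneser n k) c)
    (hx : ∃ i : Fin l, (Finset.univ.filter (fun v => c v = i)).card = x)
    (hmin : ∀ j : Fin l, x ≤ (Finset.univ.filter (fun v => c v = j)).card)
    (hnk : k + k * x ≤ n) :
    (l : ℤ) ≤ 1 + x * ((n - k).choose k) - (x - 1 : ℤ) * ((n - k * x).choose k) :=
  pseudoachromatic_kneser_refined_upper_general n k l x c hc hx
end

section
/- Let V be a set of points in general position in the plane, and let T1 and T2 be two triangles with vertices in V sharing at most one vertex. Then there is an edge (closed straight-line segment between two vertices) of T1 and an edge of T2 that are disjoint as subsets of the plane. -/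
/-!
Let `a b` be two vertices of `T2` that are not vertices of `T1`. By general position no vertex
of `T1` lies on the line `ab`, so the sign of `orient a b` splits the three vertices of `T1` into
two classes. Some two vertices fall into the same class, and the edge they span lies strictly on
one side of the line `ab`, hence misses the edge `ab` of `T2`.
-/

open Finset

/-- A finite point set in the plane is in general position if no three distinct
points of it are collinear. -/
def GenPos (V : Finset (ℝ × ℝ)) : Prop :=
  ∀ p ∈ V, ∀ q ∈ V, ∀ r ∈ V, p ≠ q → p ≠ r → q ≠ r →
    ¬ Collinear ℝ ({p, q, r} : Set (ℝ × ℝ))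

/-- The closed straight-line segment spanned by a (two-element) point set,
as the convex hull of its endpoints. -/
def seg (e : Finset (ℝ × ℝ)) : Set (ℝ × ℝ) := convexHull ℝ (e : Set (ℝ × ℝ))

/-- Twice the signed area of the triangle `a b x`; its sign tells on which side of the line `ab`
the point `x` lies. -/
def orient (a b x : ℝ × ℝ) : ℝ := (b.1 - a.1) * (x.2 - a.2) - (b.2 - a.2) * (x.1 - a.1)

lemma orient_smul_add_smul (a b p q : ℝ × ℝ) (s t : ℝ) (hst : s + t = 1) :
    orient a b (s • p + t • q) = s * orient a b p + t * orient a b q := by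
  obtain rfl : s = 1 - t := by linarith
  simp only [orient, Prod.fst_add, Prod.snd_add, Prod.smul_fst, Prod.smul_snd, smul_eq_mul]
  ring

lemma orient_eq_zero_of_mem_segment {a b x : ℝ × ℝ} (hx : x ∈ segment ℝ a b) :
    orient a b x = 0 := by
  obtain ⟨s, t, -, -, hst, rfl⟩ := hx
  rw [orient_smul_add_smul a b a b s t hst]
  simp only [orient]
  ring

lemma mem_line_of_orient_eq_zero {a b x : ℝ × ℝ} (hab : a ≠ b) (h : orient a b x = 0) :
    x ∈ line[ℝ, a, b] := by
  have hn : (b.1 - a.1) ^ 2 + (b.2 - a.2) ^ 2 ≠ 0 := by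
    intro h0
    exact hab (Prod.ext (by nlinarith) (by nlinarith))
  -- The coefficient is that of the orthogonal projection of `x - a` onto `b - a`.
  have hx : x = (((x.1 - a.1) * (b.1 - a.1) + (x.2 - a.2) * (b.2 - a.2)) /
      ((b.1 - a.1) ^ 2 + (b.2 - a.2) ^ 2)) • (b -ᵥ a) +ᵥ a := by
    simp only [orient] at h
    refine Prod.ext ?_ ?_ <;>
      simp only [vsub_eq_sub, vadd_eq_add, Prod.fst_add, Prod.snd_add, Prod.smul_fst,
        Prod.smul_snd, Prod.fst_sub, Prod.snd_sub, smul_eq_mul] <;>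
      field_simp
    · linear_combination -(b.2 - a.2) * h
    · linear_combination (b.1 - a.1) * h
  rw [hx]
  exact smul_vsub_vadd_mem_affineSpan_pair _ _ _

lemma collinear_of_orient_eq_zero {a b x : ℝ × ℝ} (h : orient a b x = 0) :
    Collinear ℝ ({x, a, b} : Set (ℝ × ℝ)) := by
  by_cases hab : a = b
  · subst hab
    simpa using collinear_pair ℝ x a
  · exact collinear_insert_of_mem_affineSpan_pair (mem_line_of_orient_eq_zero hab h)

lemma orient_mul_nonpos_of_mem_segment {a b p q x : ℝ × ℝ} (hx : x ∈ segment ℝ p q)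
    (h : orient a b x = 0) : orient a b p * orient a b q ≤ 0 := by
  obtain ⟨s, t, hs, ht, hst, rfl⟩ := hx
  rw [orient_smul_add_smul a b p q s t hst] at h
  set u := orient a b p
  set w := orient a b q
  calc u * w = -(s * u ^ 2 + t * w ^ 2) := by linear_combination (u + w) * h - u * w * hst
    _ ≤ 0 := neg_nonpos.mpr (by positivity)

lemma disjoint_segment_of_orient_mul_pos {a b p q : ℝ × ℝ}
    (h : 0 < orient a b p * orient a b q) : Disjoint (segment ℝ p q) (segment ℝ a b) :=
  Set.disjoint_left.mpr fun _ hp hab =>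
    h.not_ge (orient_mul_nonpos_of_mem_segment hp (orient_eq_zero_of_mem_segment hab))

lemma mul_pos_of_three_ne_zero {R : Type*} [CommRing R] [LinearOrder R] [IsStrictOrderedRing R]
    {u v w : R} (hu : u ≠ 0) (hv : v ≠ 0) (hw : w ≠ 0) :
    0 < u * v ∨ 0 < u * w ∨ 0 < v * w := by
  by_contra! h
  -- `(u * v) * (u * w) * (v * w) = (u * v * w) ^ 2` is positive.
  have : 0 < (u * v * w) ^ 2 := by positivity
  nlinarith [mul_nonneg (neg_nonneg.mpr h.1) (neg_nonneg.mpr h.2.1)]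

lemma seg_pair (x y : ℝ × ℝ) : seg {x, y} = segment ℝ x y := by
  rw [seg, coe_pair, convexHull_pair]

lemma exists_edge_disjoint_segment {T : Finset (ℝ × ℝ)} (hT : T.card = 3) {a b : ℝ × ℝ}
    (h : ∀ v ∈ T, orient a b v ≠ 0) :
    ∃ e ⊆ T, e.card = 2 ∧ Disjoint (seg e) (segment ℝ a b) := by
  obtain ⟨p, q, r, hpq, hpr, hqr, rfl⟩ := card_eq_three.mp hT
  have edge : ∀ x ∈ ({p, q, r} : Finset (ℝ × ℝ)), ∀ y ∈ ({p, q, r} : Finset (ℝ × ℝ)),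
      x ≠ y → 0 < orient a b x * orient a b y →
      ∃ e ⊆ {p, q, r}, e.card = 2 ∧ Disjoint (seg e) (segment ℝ a b) :=
    fun x hx y hy hxy hpos => ⟨{x, y}, insert_subset hx (singleton_subset_iff.mpr hy),
      card_pair hxy, seg_pair x y ▸ disjoint_segment_of_orient_mul_pos hpos⟩
  rcases mul_pos_of_three_ne_zero (h p (by simp)) (h q (by simp)) (h r (by simp)) with
    hpos | hpos | hpos
  · exact edge p (by simp) q (by simp) hpq hpos
  · exact edge p (by simp) r (by simp) hpr hpos
  · exact edge q (by simp) r (by simp) hqr hpos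

/-- Two triangles with vertices in a point set in general position, sharing at
most one vertex, contain two disjoint edges. -/
theorem triangles_contain_disjoint_edges (V : Finset (ℝ × ℝ)) (hV : GenPos V)
    (T1 T2 : Finset (ℝ × ℝ)) (hT1 : T1 ⊆ V) (hT2 : T2 ⊆ V)
    (hc1 : T1.card = 3) (hc2 : T2.card = 3)
    (hshare : (T1 ∩ T2).card ≤ 1) :
    ∃ e1 ⊆ T1, ∃ e2 ⊆ T2, e1.card = 2 ∧ e2.card = 2 ∧
      Disjoint (seg e1) (seg e2) := by
  have hfresh : 1 < (T2 \ T1).card := by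
    have := card_sdiff_add_card_inter T2 T1
    rw [inter_comm] at this
    omega
  obtain ⟨a, ha, b, hb, hab⟩ := one_lt_card.mp hfresh
  rw [mem_sdiff] at ha hb
  have hoff : ∀ v ∈ T1, orient a b v ≠ 0 := fun v hv h =>
    hV v (hT1 hv) a (hT2 ha.1) b (hT2 hb.1) (by rintro rfl; exact ha.2 hv)
      (by rintro rfl; exact hb.2 hv) hab (collinear_of_orient_eq_zero h)
  obtain ⟨e1, he1, hcard, hdisj⟩ := exists_edge_disjoint_segment hc1 hoff
  exact ⟨e1, he1, {a, b}, insert_subset ha.1 (singleton_subset_iff.mpr hb.1), hcard,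
    card_pair hab, seg_pair a b ▸ hdisj⟩
end

section
/- For n even with n ≡ 0 or 2 (mod 6), the edge set of the complete graph K_n can be partitioned into one perfect matching and a collection of triangles. -/
/-!
Deleting one point of a Steiner triple system on `n + 1` points leaves the required
decomposition of `K_n`: the triples through the deleted point become the perfect matching, the
others the triangles. Such systems exist for `n + 1 ≡ 1, 3 (mod 6)`, and they are produced as
Steiner quasigroups (`x ∘ x = x`, `x ∘ y = y ∘ x`, `x ∘ (x ∘ y) = y`), whose lines
`{x, y, x ∘ y}` form the triple system. For `n + 1 = 3w` with `w` odd this is Bose's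
construction on `ZMod w × ZMod 3`, built from the midpoint quasigroup of `ZMod w`; for
`n + 1 = 6u + 1` it is Skolem's construction on `ZMod (2u) × ZMod 3` plus a point at infinity,
built from a commutative quasigroup of order `2u` that is idempotent on half of its elements.
-/

open Finset

variable {α β : Type*}

structure IsSteinerTripleSystem (B : Finset (Finset α)) : Prop where
  card_eq_three : ∀ t ∈ B, t.card = 3
  existsUnique : ∀ x y, x ≠ y → ∃! t, t ∈ B ∧ x ∈ t ∧ y ∈ t

theorem IsSteinerTripleSystem.eq_of_mem {B : Finset (Finset α)} (hB : IsSteinerTripleSystem B)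
    {x y : α} (hxy : x ≠ y) {s t : Finset α} (hs : s ∈ B) (hxs : x ∈ s) (hys : y ∈ s)
    (ht : t ∈ B) (hxt : x ∈ t) (hyt : y ∈ t) : s = t :=
  (hB.existsUnique x y hxy).unique ⟨hs, hxs, hys⟩ ⟨ht, hxt, hyt⟩

def IsMatchingTriangleDecomposition (F T : Finset (Finset α)) : Prop :=
  (∀ e ∈ F, e.card = 2) ∧
  (F : Set (Finset α)).PairwiseDisjoint id ∧
  (∀ v : α, ∃ e ∈ F, v ∈ e) ∧
  (∀ t ∈ T, t.card = 3) ∧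
  (∀ e : Finset α, e.card = 2 →
    ((e ∈ F ∧ ∀ t ∈ T, ¬ e ⊆ t) ∨ (e ∉ F ∧ ∃! t, t ∈ T ∧ e ⊆ t)))

theorem IsSteinerTripleSystem.insertNone_mem_or_existsUnique [DecidableEq α]
    {B : Finset (Finset (Option α))} (hB : IsSteinerTripleSystem B) {a b : α} (hab : a ≠ b) :
    ((insertNone {a, b} ∈ B ∧ ∀ t : Finset α, t.map .some ∈ B → ¬ {a, b} ⊆ t) ∨
      (insertNone {a, b} ∉ B ∧ ∃! t : Finset α, t.map .some ∈ B ∧ {a, b} ⊆ t)) := by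
  have hab' : some a ≠ some b := Option.some_injective _ |>.ne hab
  obtain ⟨t₀, ⟨ht₀, ha, hb⟩, -⟩ := hB.existsUnique _ _ hab'
  have eq_t₀ : ∀ t ∈ B, some a ∈ t → some b ∈ t → t = t₀ := fun t ht hat hbt =>
    hB.eq_of_mem hab' ht hat hbt ht₀ ha hb
  have map_eq_t₀ : ∀ t : Finset α, t.map .some ∈ B → {a, b} ⊆ t → t.map .some = t₀ :=
    fun t ht hsub => by
      rw [insert_subset_iff, singleton_subset_iff] at hsub
      exact eq_t₀ _ ht (mem_map_of_mem _ hsub.1) (mem_map_of_mem _ hsub.2)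
  by_cases hnone : none ∈ t₀
  · have hsub : insertNone {a, b} ⊆ t₀ := by
      rintro (_ | x) hx
      · exact hnone
      · rcases (by simpa using hx : x = a ∨ x = b) with rfl | rfl <;> assumption
    refine .inl ⟨?_, fun t ht hsub => ?_⟩
    · rwa [eq_of_subset_of_card_le hsub (by
        rw [hB.card_eq_three _ ht₀, card_insertNone, card_pair hab])]
    · rw [← map_eq_t₀ t ht hsub] at hnone
      simp at hnone
  · refine .inr ⟨fun hF => hnone ?_, t₀.eraseNone, ⟨?_, ?_⟩, fun t ⟨ht, hsub⟩ => ?_⟩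
    · rw [← eq_t₀ _ hF (by simp) (by simp)]
      simp
    · simpa [erase_eq_of_notMem hnone] using ht₀
    · simp [insert_subset_iff, ha, hb]
    · refine map_injective Function.Embedding.some ?_
      rw [map_some_eraseNone, erase_eq_of_notMem hnone]
      exact map_eq_t₀ t ht hsub

theorem IsSteinerTripleSystem.isMatchingTriangleDecomposition_of_option [Fintype α]
    [DecidableEq α] {B : Finset (Finset (Option α))} (hB : IsSteinerTripleSystem B) :
    IsMatchingTriangleDecomposition ({e | e.insertNone ∈ B} : Finset (Finset α))
      {t | t.map .some ∈ B} := by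
  refine ⟨fun e he => ?_, fun e₁ he₁ e₂ he₂ hne => ?_, fun v => ?_, fun t ht => ?_,
    fun e he => ?_⟩
  · have := hB.card_eq_three _ (mem_filter.1 he).2
    rw [card_insertNone] at this
    omega
  · refine disjoint_left.2 fun v hv₁ hv₂ => hne (insertNone.injective ?_)
    exact hB.eq_of_mem (Option.some_ne_none v).symm (mem_filter.1 he₁).2 (by simp)
      (by simpa using hv₁) (mem_filter.1 he₂).2 (by simp) (by simpa using hv₂)
  · obtain ⟨t, ⟨ht, hnone, hv⟩, -⟩ := hB.existsUnique none (some v) (Option.some_ne_none v).symm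
    refine ⟨t.eraseNone, mem_filter.2 ⟨mem_univ _, ?_⟩, mem_eraseNone.2 hv⟩
    rwa [insertNone_eraseNone, insert_eq_of_mem hnone]
  · rw [← card_map, hB.card_eq_three _ (mem_filter.1 ht).2]
  · obtain ⟨a, b, hab, rfl⟩ := card_eq_two.1 he
    simpa only [mem_filter, mem_univ, true_and] using hB.insertNone_mem_or_existsUnique hab

structure IsSteinerQuasigroup (op : α → α → α) : Prop where
  op_self : ∀ x, op x x = x
  op_comm : ∀ x y, op x y = op y x
  op_op_cancel_left : ∀ x y, op x (op x y) = y

namespace IsSteinerQuasigroup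

variable {op : α → α → α}

theorem op_op_cancel_right (h : IsSteinerQuasigroup op) (x y : α) : op y (op x y) = x := by
  rw [h.op_comm x y, h.op_op_cancel_left]

theorem op_ne_left (h : IsSteinerQuasigroup op) {x y : α} (hxy : x ≠ y) : op x y ≠ x :=
  fun hx => hxy (by rw [← h.op_op_cancel_left x y, hx, h.op_self])

theorem op_ne_right (h : IsSteinerQuasigroup op) {x y : α} (hxy : x ≠ y) : op x y ≠ y := by
  rw [h.op_comm]
  exact h.op_ne_left hxy.symm

theorem line_eq_of_mem (h : IsSteinerQuasigroup op) [DecidableEq α] {x y u v : α} (huv : u ≠ v)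
    (hu : u ∈ ({x, y, op x y} : Finset α)) (hv : v ∈ ({x, y, op x y} : Finset α)) :
    ({u, v, op u v} : Finset α) = {x, y, op x y} := by
  simp only [mem_insert, mem_singleton] at hu hv
  rcases hu with rfl | rfl | rfl <;> rcases hv with rfl | rfl | rfl <;>
    first
    | exact absurd rfl huv
    | ext; simp only [mem_insert, mem_singleton, h.op_op_cancel_right, h.op_comm] <;> tauto

theorem equiv (h : IsSteinerQuasigroup op) (e : α ≃ β) :
    IsSteinerQuasigroup fun a b => e (op (e.symm a) (e.symm b)) where
  op_self a := by simp [h.op_self]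
  op_comm a b := by rw [h.op_comm]
  op_op_cancel_left a b := by simp [h.op_op_cancel_left]

variable [Fintype α] [DecidableEq α]

variable (op) in
def lines : Finset (Finset α) :=
  ({p : α × α | p.1 ≠ p.2} : Finset (α × α)).image fun p => {p.1, p.2, op p.1 p.2}

theorem isSteinerTripleSystem_lines (h : IsSteinerQuasigroup op) :
    IsSteinerTripleSystem (lines op) where
  card_eq_three t ht := by
    simp only [lines, mem_image, mem_filter, mem_univ, true_and, Prod.exists] at ht
    obtain ⟨x, y, hxy, rfl⟩ := ht
    rw [card_insert_of_notMem, card_pair (h.op_ne_right hxy).symm]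
    simpa [not_or] using ⟨hxy, (h.op_ne_left hxy).symm⟩
  existsUnique x y hxy := by
    refine ⟨{x, y, op x y}, ⟨mem_image.2 ⟨(x, y), by simpa using hxy, rfl⟩, by simp, by simp⟩, ?_⟩
    rintro t ⟨ht, hxt, hyt⟩
    simp only [lines, mem_image, mem_filter, mem_univ, true_and, Prod.exists] at ht
    obtain ⟨a, b, -, rfl⟩ := ht
    exact (h.line_eq_of_mem hxy hxt hyt).symm

end IsSteinerQuasigroup

theorem ZMod.eq_add_one_or_eq_add_one_of_ne {i j : ZMod 3} (h : i ≠ j) :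
    j = i + 1 ∨ i = j + 1 := by
  revert i j; decide

@[simp] theorem ZMod.three_self_ne_add_one_add_one (i : ZMod 3) : i ≠ i + 1 + 1 := by
  revert i; decide

@[simp] theorem ZMod.three_add_one_add_one_add_one (i : ZMod 3) : i + 1 + 1 + 1 = i := by
  revert i; decide

namespace Bose

variable (R : Type*) {V P : Type*} [Ring R] [Invertible (2 : R)] [AddCommGroup V] [Module R V]
  [AddTorsor V P] [DecidableEq P]

/-- The lines are `{(x, 0), (x, 1), (x, 2)}` and `{(x, i), (y, i), (midpoint x y, i + 1)}`.
For `i ≠ j`, `-(i + j)` is the remaining element of `ZMod 3`. -/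
def op : P × ZMod 3 → P × ZMod 3 → P × ZMod 3
  | (x, i), (y, j) =>
    if x = y then (x, -(i + j))
    else if i = j then (midpoint R x y, i + 1)
    else if j = i + 1 then (Equiv.pointReflection y x, i)
    else (Equiv.pointReflection x y, j)

theorem isSteinerQuasigroup_op : IsSteinerQuasigroup (op R (P := P)) where
  op_self := by
    rintro ⟨x, i⟩
    simp only [op, if_true, Prod.mk.injEq, true_and]
    revert i; decide
  op_comm := by
    rintro ⟨x, i⟩ ⟨y, j⟩
    by_cases hxy : x = y
    · subst hxy
      simp [op, add_comm]
    by_cases hij : i = j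
    · subst hij
      simp [op, hxy, Ne.symm hxy, midpoint_comm]
    rcases ZMod.eq_add_one_or_eq_add_one_of_ne hij with rfl | rfl <;>
      simp [op, hxy, Ne.symm hxy]
  op_op_cancel_left := by
    rintro ⟨x, i⟩ ⟨y, j⟩
    by_cases hxy : x = y
    · subst hxy
      simp [op]
    by_cases hij : i = j
    · subst hij
      simp [op, hxy]
    have hyx : x ≠ Equiv.pointReflection y x := fun h =>
      hxy ((AffineEquiv.pointReflection_fixed_iff_of_module R).1 h.symm)
    have hxy' : x ≠ Equiv.pointReflection x y := fun h =>
      hxy ((Equiv.pointReflection x).injective (by rwa [Equiv.pointReflection_self]))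
    by_cases hj : j = i + 1
    · subst hj
      simp [op, hxy, hyx]
    · simp [op, hxy, hij, hj, hxy', Equiv.pointReflection_involutive x y]

end Bose

/-! `double` and `half` are inverse bijections of `ZMod (2 * u)`, so `mul x y = half (x + y)` is
a commutative quasigroup with left division `ldiv`. It is idempotent exactly on the elements of
value `< u`, and `x` and `partner x` (exactly one of them idempotent) have the same square. -/
namespace Skolem

variable {u : ℕ}

def half (v : ZMod (2 * u)) : ZMod (2 * u) := (v.val / 2 + v.val % 2 * u : ℕ)

def double (w : ZMod (2 * u)) : ZMod (2 * u) := (2 * w.val + if w.val < u then 0 else 1 : ℕ)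

def mul (x y : ZMod (2 * u)) : ZMod (2 * u) := half (x + y)

def ldiv (x y : ZMod (2 * u)) : ZMod (2 * u) := double y - x

def partner (x : ZMod (2 * u)) : ZMod (2 * u) := x + u

theorem mul_comm (x y : ZMod (2 * u)) : mul x y = mul y x := by
  rw [mul, mul, add_comm]

theorem partner_partner (x : ZMod (2 * u)) : partner (partner x) = x := by
  rw [partner, partner, add_assoc, ← Nat.cast_add, ← two_mul u, ZMod.natCast_self, add_zero]

theorem mul_self_partner (x : ZMod (2 * u)) : mul (partner x) (partner x) = mul x x := by
  rw [mul, mul, partner, add_add_add_comm, ← Nat.cast_add, ← two_mul u, ZMod.natCast_self,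
    add_zero]

variable [NeZero u]

theorem val_half (v : ZMod (2 * u)) : (half v).val = v.val / 2 + v.val % 2 * u := by
  have := v.val_lt
  rw [half, ZMod.val_natCast, Nat.mod_eq_of_lt]
  rcases Nat.mod_two_eq_zero_or_one v.val with h | h <;> rw [h] <;> omega

theorem half_double (w : ZMod (2 * u)) : half (double w) = w := by
  have hw := w.val_lt
  conv_rhs => rw [← ZMod.natCast_zmod_val w]
  rw [half, double, ZMod.val_natCast]
  congr 1
  split_ifs with h
  · rw [Nat.mod_eq_of_lt (by omega), show (2 * w.val + 0) % 2 = 0 by omega]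
    omega
  · rw [Nat.mod_eq_sub_mod (by omega), Nat.mod_eq_of_lt (by omega),
      show (2 * w.val + 1 - 2 * u) % 2 = 1 by omega]
    omega

theorem double_half (v : ZMod (2 * u)) : double (half v) = v := by
  have hv := v.val_lt
  rw [double, val_half]
  conv_rhs => rw [← ZMod.natCast_zmod_val v]
  rcases Nat.mod_two_eq_zero_or_one v.val with h | h
  · rw [h, if_pos (by omega)]
    congr 1
    omega
  · rw [h, if_neg (by omega), ← add_zero (v.val : ZMod (2 * u)), ← ZMod.natCast_self (2 * u),
      ← Nat.cast_add]
    congr 1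
    omega

theorem mul_ldiv (x y : ZMod (2 * u)) : mul x (ldiv x y) = y := by
  rw [mul, ldiv, add_sub_cancel, half_double]

theorem ldiv_mul (x y : ZMod (2 * u)) : ldiv x (mul x y) = y := by
  rw [mul, ldiv, double_half, add_sub_cancel_left]

theorem mul_left_cancel {x y z : ZMod (2 * u)} (h : mul x y = mul x z) : y = z := by
  rw [← ldiv_mul x y, h, ldiv_mul]

theorem mul_right_cancel {x y z : ZMod (2 * u)} (h : mul y x = mul z x) : y = z := by
  rw [mul_comm y, mul_comm z] at h
  exact mul_left_cancel h

theorem val_mul_self (x : ZMod (2 * u)) : (mul x x).val = x.val % u := by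
  rw [mul, val_half, ZMod.val_add, ← two_mul, Nat.mul_mod_mul_left, Nat.mul_mod_right, zero_mul,
    add_zero, Nat.mul_div_cancel_left _ two_pos]

theorem mul_self_eq_self_iff (x : ZMod (2 * u)) : mul x x = x ↔ x.val < u := by
  rw [← ZMod.val_injective _ |>.eq_iff, val_mul_self]
  exact ⟨fun h => h ▸ Nat.mod_lt _ (NeZero.pos u), Nat.mod_eq_of_lt⟩

theorem mul_self_mul_self (x : ZMod (2 * u)) : mul (mul x x) (mul x x) = mul x x := by
  rw [mul_self_eq_self_iff, val_mul_self]
  exact Nat.mod_lt _ (NeZero.pos u)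

theorem val_partner (x : ZMod (2 * u)) :
    (partner x).val = if x.val < u then x.val + u else x.val - u := by
  have := x.val_lt
  rw [partner, ZMod.val_add, ZMod.val_natCast, Nat.mod_eq_of_lt (a := u) (by omega)]
  split_ifs with h
  · exact Nat.mod_eq_of_lt (by omega)
  · rw [Nat.mod_eq_sub_mod (by omega), Nat.mod_eq_of_lt (by omega)]
    omega

theorem partner_ne_self (x : ZMod (2 * u)) : partner x ≠ x := by
  rw [partner, Ne, add_eq_left, ← ZMod.val_eq_zero, ZMod.val_natCast,
    Nat.mod_eq_of_lt (by have := NeZero.pos u; omega)]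
  exact NeZero.ne u

theorem mul_self_eq_partner (x : ZMod (2 * u)) (hx : mul x x ≠ x) : mul x x = partner x := by
  rw [Ne, mul_self_eq_self_iff] at hx
  have := x.val_lt
  apply ZMod.val_injective
  rw [val_mul_self, val_partner, if_neg hx, Nat.mod_eq_sub_mod (by omega),
    Nat.mod_eq_of_lt (by omega)]

theorem partner_mul_self (x : ZMod (2 * u)) (hx : mul x x ≠ x) : partner (mul x x) = x := by
  rw [mul_self_eq_partner x hx, partner_partner]

variable (u) in
/-- `none` is the point at infinity. The lines are `{(x, 0), (x, 1), (x, 2)}` for idempotent `x`,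
`{∞, (x, i), (mul x x, i + 1)}` for the others, and `{(x, i), (y, i), (mul x y, i + 1)}`. -/
def op : Option (ZMod (2 * u) × ZMod 3) → Option (ZMod (2 * u) × ZMod 3) →
    Option (ZMod (2 * u) × ZMod 3)
  | none, none => none
  | none, some (x, i) | some (x, i), none =>
    if mul x x = x then some (partner x, i + 1 + 1) else some (mul x x, i + 1)
  | some (x, i), some (y, j) =>
    if i = j then if x = y then some (x, i) else some (mul x y, i + 1)
    else if j = i + 1 then
      if x = y ∧ mul x x = x then some (x, i + 1 + 1)
      else if y = mul x x then none else some (ldiv x y, i)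
    else
      if x = y ∧ mul x x = x then some (x, j + 1 + 1)
      else if x = mul y y then none else some (ldiv y x, j)

theorem op_none_op_none (y : ZMod (2 * u)) (j : ZMod 3) :
    op u none (op u none (some (y, j))) = some (y, j) := by
  by_cases hy : mul y y = y
  · simp [op, hy, (partner_ne_self y).symm, mul_self_partner]
  · simp [op, hy, mul_self_mul_self, partner_mul_self y hy]

theorem op_some_op_none (x : ZMod (2 * u)) (i : ZMod 3) :
    op u (some (x, i)) (op u (some (x, i)) none) = none := by
  by_cases hx : mul x x = x
  · simp [op, hx, (partner_ne_self x).symm, mul_self_partner]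
  · simp [op, hx, Ne.symm hx]

theorem op_op_of_eq_level {x y : ZMod (2 * u)} (hxy : x ≠ y) (i : ZMod 3) :
    op u (some (x, i)) (op u (some (x, i)) (some (y, i))) = some (y, i) := by
  have hne : mul x y ≠ mul x x := fun h => hxy (mul_left_cancel h).symm
  have hH : ¬(x = mul x y ∧ mul x x = x) := fun ⟨h₁, h₂⟩ => hne (h₁.symm.trans h₂.symm)
  simp [op, hxy, hne, hH, ldiv_mul]

theorem op_op_of_level_add_one (x y : ZMod (2 * u)) (i : ZMod 3) :
    op u (some (x, i)) (op u (some (x, i)) (some (y, i + 1))) = some (y, i + 1) := by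
  by_cases hH : x = y ∧ mul x x = x
  · obtain ⟨rfl, hx⟩ := hH
    simp [op, hx]
  by_cases hy : y = mul x x
  · have hx : mul x x ≠ x := fun hx => hH ⟨(hy.trans hx).symm, hx⟩
    subst hy
    simp [op, hx]
  · have hx : x ≠ ldiv x y := fun h => hy (by rw [← mul_ldiv x y, ← h])
    simp [op, hH, hy, hx, mul_ldiv]

theorem op_op_of_add_one_level (x y : ZMod (2 * u)) (j : ZMod 3) :
    op u (some (x, j + 1)) (op u (some (x, j + 1)) (some (y, j))) = some (y, j) := by
  by_cases hH : x = y ∧ mul x x = x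
  · obtain ⟨rfl, hx⟩ := hH
    simp [op, hx]
  by_cases hx : x = mul y y
  · have hy : mul y y ≠ y := fun hy => hH ⟨hx.trans hy, hx ▸ mul_self_mul_self y⟩
    subst hx
    simp [op, hy, mul_self_mul_self, partner_mul_self y hy]
  generalize hz : ldiv y x = z
  have hyz : mul y z = x := hz ▸ mul_ldiv y x
  have hH' : ¬(x = z ∧ mul x x = x) := by
    rintro ⟨rfl, hx'⟩
    exact hH ⟨(mul_right_cancel (hyz.trans hx'.symm)).symm, hx'⟩
  have hxz : x ≠ mul z z := by
    intro h
    obtain rfl : y = z := mul_right_cancel (hyz.trans h)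
    exact hx h
  have hzx : ldiv z x = y := by rw [← hyz, mul_comm, ldiv_mul]
  simp [op, hH, hx, hz, hH', hxz, hzx]

theorem isSteinerQuasigroup_op : IsSteinerQuasigroup (op u) where
  op_self := by
    rintro (_ | ⟨x, i⟩) <;> simp [op]
  op_comm := by
    rintro (_ | ⟨x, i⟩) (_ | ⟨y, j⟩)
    · rfl
    · rfl
    · rfl
    by_cases hij : i = j
    · subst hij
      by_cases hxy : x = y
      · subst hxy
        rfl
      · simp [op, hxy, Ne.symm hxy, mul_comm]
    by_cases hxy : x = y
    · subst hxy
      rcases ZMod.eq_add_one_or_eq_add_one_of_ne hij with rfl | rfl <;> simp [op]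
    · rcases ZMod.eq_add_one_or_eq_add_one_of_ne hij with rfl | rfl <;>
        simp [op, hxy, Ne.symm hxy]
  op_op_cancel_left := by
    rintro (_ | ⟨x, i⟩) (_ | ⟨y, j⟩)
    · rfl
    · exact op_none_op_none y j
    · exact op_some_op_none x i
    by_cases hij : i = j
    · subst hij
      by_cases hxy : x = y
      · subst hxy
        simp [op]
      · exact op_op_of_eq_level hxy i
    rcases ZMod.eq_add_one_or_eq_add_one_of_ne hij with rfl | rfl
    · exact op_op_of_level_add_one x y i
    · exact op_op_of_add_one_level x y j

end Skolem

theorem IsSteinerQuasigroup.exists_fin [Fintype α] {op : α → α → α} (h : IsSteinerQuasigroup op)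
    {v : ℕ} (hv : Fintype.card α = v) : ∃ op' : Fin v → Fin v → Fin v, IsSteinerQuasigroup op' :=
  ⟨_, h.equiv (Fintype.equivFinOfCardEq hv)⟩

theorem exists_isSteinerQuasigroup_fin {v : ℕ} (hv : v % 6 = 1 ∨ v % 6 = 3) :
    ∃ op : Fin v → Fin v → Fin v, IsSteinerQuasigroup op := by
  rcases hv with hv | hv
  · obtain ⟨u, rfl⟩ : ∃ u, v = 6 * u + 1 := ⟨v / 6, by omega⟩
    rcases Nat.eq_zero_or_pos u with rfl | hu
    · exact ⟨fun x _ => x, fun _ => rfl, fun x y => Subsingleton.elim (α := Fin 1) x y,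
        fun _ y => Subsingleton.elim (α := Fin 1) _ y⟩
    · have : NeZero u := ⟨hu.ne'⟩
      exact (Skolem.isSteinerQuasigroup_op (u := u)).exists_fin
        (by rw [Fintype.card_option, Fintype.card_prod, ZMod.card, ZMod.card]; ring)
  · obtain ⟨w, rfl, hw⟩ : ∃ w, v = 3 * w ∧ w % 2 = 1 := ⟨v / 3, by omega, by omega⟩
    have : NeZero w := ⟨by omega⟩
    have h2 : IsUnit (2 : ZMod w) := by
      simpa using (ZMod.isUnit_iff_coprime 2 w).2 (Nat.coprime_two_left.2 (Nat.odd_iff.2 hw))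
    have := h2.invertible
    exact (Bose.isSteinerQuasigroup_op (ZMod w) (P := ZMod w)).exists_fin
      (by rw [Fintype.card_prod, ZMod.card, ZMod.card, Nat.mul_comm])

/-- For n ≡ 0 or 2 (mod 6), the edge set of K_n can be partitioned into a
perfect matching and triangles: there are a family F of pairwise-disjoint
2-sets covering all vertices and a family T of 3-sets such that every 2-set of
vertices either lies in F (and in no triangle) or is contained in exactly one
triangle of T. -/
theorem complete_graph_matching_triangle_partition (n : ℕ)
    (hn : n % 6 = 0 ∨ n % 6 = 2) :
    ∃ F T : Finset (Finset (Fin n)),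
      (∀ e ∈ F, e.card = 2) ∧
      (F : Set (Finset (Fin n))).PairwiseDisjoint id ∧
      (∀ v : Fin n, ∃ e ∈ F, v ∈ e) ∧
      (∀ t ∈ T, t.card = 3) ∧
      (∀ e : Finset (Fin n), e.card = 2 →
        ((e ∈ F ∧ ∀ t ∈ T, ¬ e ⊆ t) ∨ (e ∉ F ∧ ∃! t, t ∈ T ∧ e ⊆ t))) := by
  obtain ⟨op, hop⟩ := exists_isSteinerQuasigroup_fin (v := n + 1) (by omega)
  exact ⟨_, _, ((hop.equiv (finSuccEquiv n)).isSteinerTripleSystem_lines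
    ).isMatchingTriangleDecomposition_of_option⟩
end
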